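/- arXiv:1003.2027 — 4 statements merged into one kernel-verified Lean document; each statement's English description precedes it below -/
import Mathlib

section
/- Let Ω be a set and let f, g : Ω → Ω be injective. Then |Ω \ (f∘g)(Ω)| = |Ω \ f(Ω)| + |Ω \ g(Ω)| as cardinals. -/
theorem stmt_1 {Ω : Type*} (f g : Ω → Ω) (hf : Function.Injective f)
    (hg : Function.Injective g) :
    Cardinal.mk ↥((Set.range (f ∘ g))ᶜ) =
      Cardinal.mk ↥((Set.range f)ᶜ) + Cardinal.mk ↥((Set.range g)ᶜ) := by
  have hset : (Set.range (f ∘ g))ᶜ = (Set.range f)ᶜ ∪ f '' (Set.range g)ᶜ := by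
    ext x
    simp only [Set.range_comp, Set.mem_compl_iff, Set.mem_image, Set.mem_union,
      Set.mem_range]
    constructor
    · intro h
      by_cases hx : ∃ y, f y = x
      · obtain ⟨y, rfl⟩ := hx
        right
        exact ⟨y, fun ⟨z, hz⟩ => h ⟨g z, ⟨z, rfl⟩, congrArg f hz⟩, rfl⟩
      · left; exact hx
    · rintro (h | ⟨y, hy, rfl⟩) ⟨z, ⟨w, rfl⟩, hzx⟩
      · exact h ⟨g w, hzx⟩
      · exact hy ⟨w, hf hzx⟩
  have hdisj : Disjoint ((Set.range f)ᶜ) (f '' (Set.range g)ᶜ) := by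
    rw [Set.disjoint_left]
    rintro x hx ⟨y, _, rfl⟩
    exact hx ⟨y, rfl⟩
  rw [hset, Cardinal.mk_union_of_disjoint hdisj, Cardinal.mk_image_eq hf]
end

section
/- Let Ω be a set and f, g : Ω → Ω injective maps with equivalent cycle decompositions. Then there exists a permutation a of Ω such that g = a∘f∘a⁻¹. -/
universe u

def IsCycle {Ω : Type u} (f : Ω → Ω) (S : Set Ω) : Prop :=
  S.Nonempty ∧ (∀ γ, f γ ∈ S ↔ γ ∈ S) ∧
    ∀ T, T ⊆ S → T.Nonempty → (∀ γ, f γ ∈ T ↔ γ ∈ T) → T = S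

def IsForwardCycle {Ω : Type u} (f : Ω → Ω) (S : Set Ω) : Prop :=
  IsCycle f S ∧ S.Infinite ∧ ∃ α ∈ S, α ∉ Set.range f

def IsOpenCycle {Ω : Type u} (f : Ω → Ω) (S : Set Ω) : Prop :=
  IsCycle f S ∧ S.Infinite ∧ ¬ IsForwardCycle f S

def EquivCycleDecomp {Ω Ω' : Type u} (f : Ω → Ω) (g : Ω' → Ω') : Prop :=
  ∃ (I : Type u) (S : I → Set Ω) (T : I → Set Ω'),
    (∀ i, IsCycle f (S i)) ∧ (∀ i, IsCycle g (T i)) ∧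
    (∀ α : Ω, ∃! i, α ∈ S i) ∧ (∀ β : Ω', ∃! i, β ∈ T i) ∧
    (∀ i, Cardinal.mk ↥(S i) = Cardinal.mk ↥(T i)) ∧
    (∀ i, Cardinal.mk ↥(S i) = Cardinal.aleph0 →
      (IsForwardCycle f (S i) ↔ IsForwardCycle g (T i)))

/-!
If some point of a cycle `S` of the injective map `f` has no preimage, `S` is its forward orbit
and `f|S` is the successor map of `ℕ`; otherwise `f|S` is a permutation of `S` with a single
`ℤ`-orbit, hence conjugate to `+1` on `ZMod (Nat.card S)` (`ZMod 0 = ℤ` covers the infinite case).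
So a cycle is determined up to conjugacy by its size and by whether it is forward, and the
conjugacies between matched cycles glue along the two partitions.
-/

open Function Set

section SingleCycle

variable {X : Type*}

theorem IsCycle.bijective_iterate {r : X → X} (hc : IsCycle r univ) (hr : Injective r)
    {α : X} (hα : α ∉ range r) : Bijective fun n : ℕ => r^[n] α := by
  refine ⟨fun i j hij => ?_, range_eq_univ.1 ?_⟩
  · wlog hlt : i < j generalizing i j
    · rcases (not_lt.1 hlt).lt_or_eq with h | h
      exacts [(this j i hij.symm h).symm, h.symm]
    obtain ⟨d, rfl⟩ := Nat.exists_eq_add_of_lt hlt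
    have hαr : α = r (r^[d] α) := by
      rw [← iterate_succ_apply' r d]
      exact hr.iterate i (by simpa [iterate_add_apply] using hij)
    exact absurd ⟨_, hαr.symm⟩ hα
  · refine hc.2.2 _ (subset_univ _) ⟨α, 0, rfl⟩ fun γ => ⟨?_, ?_⟩
    · rintro ⟨_ | n, hn⟩
      · exact absurd ⟨γ, hn.symm⟩ hα
      · exact ⟨n, hr (by simpa [iterate_succ_apply'] using hn)⟩
    · rintro ⟨n, rfl⟩
      exact ⟨n + 1, iterate_succ_apply' r n α⟩

theorem IsCycle.exists_equiv_nat {r : X → X} (hc : IsCycle r univ) (hr : Injective r)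
    (hns : ¬ Surjective r) : ∃ φ : ℕ ≃ X, Semiconj φ (· + 1) r := by
  obtain ⟨α, hα⟩ := not_forall.1 hns
  exact ⟨Equiv.ofBijective _ (hc.bijective_iterate hr (by simpa using hα)),
    fun n => iterate_succ_apply' r n α⟩

theorem IsCycle.orbit_zpowers_eq_univ {F : Equiv.Perm X} (hc : IsCycle F univ) (α : X) :
    MulAction.orbit (Subgroup.zpowers F) α = univ := by
  refine hc.2.2 _ (subset_univ _) ⟨α, MulAction.mem_orbit_self α⟩ fun γ => ?_
  rw [← MulAction.orbit_eq_iff, ← MulAction.orbit_eq_iff,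
    show F γ = (⟨F, Subgroup.mem_zpowers F⟩ : Subgroup.zpowers F) • γ from rfl,
    MulAction.orbit_smul]

theorem IsCycle.exists_equiv_zmod {F : Equiv.Perm X} (hc : IsCycle F univ) {n : ℕ}
    (hn : Nat.card X = n) : ∃ φ : ZMod n ≃ X, Semiconj φ (· + 1) F := by
  obtain ⟨α, -⟩ := hc.1
  have horbit := hc.orbit_zpowers_eq_univ α
  obtain rfl : minimalPeriod (F • ·) α = n := by
    rw [← hn, ← Nat.card_zmod (minimalPeriod (F • ·) α),
      ← Nat.card_congr (MulAction.orbitZPowersEquiv F α), horbit, Nat.card_univ]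
  refine ⟨(MulAction.orbitZPowersEquiv F α).symm.trans
    ((Equiv.setCongr horbit).trans (Equiv.Set.univ X)), fun k => ?_⟩
  obtain ⟨m, rfl⟩ := ZMod.intCast_surjective k
  have hcoe : ∀ m : ℤ, ((MulAction.orbitZPowersEquiv F α).symm m : X) = (F ^ m) α := fun m => by
    rw [MulAction.orbitZPowersEquiv_symm_apply']
    rfl
  simp only [Equiv.trans_apply, Equiv.Set.univ_apply, Equiv.setCongr_apply]
  rw [← Int.cast_one, ← Int.cast_add, hcoe, hcoe, add_comm, zpow_one_add, Equiv.Perm.mul_apply]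

theorem IsCycle.exists_equiv_semiconj {Y : Type*} {r : X → X} {s : Y → Y}
    (hrc : IsCycle r univ) (hsc : IsCycle s univ) (hr : Injective r) (hs : Injective s)
    (hcard : Nat.card X = Nat.card Y) (hsurj : Surjective r ↔ Surjective s) :
    ∃ φ : X ≃ Y, Semiconj φ r s := by
  have glue : ∀ {Z : Type} {t : Z → Z} (φ : Z ≃ X) (ψ : Z ≃ Y),
      Semiconj φ t r → Semiconj ψ t s → ∃ χ : X ≃ Y, Semiconj χ r s :=
    fun φ ψ hφ hψ => ⟨φ.symm.trans ψ, hψ.comp_left (hφ.inverse_left φ.left_inv φ.right_inv)⟩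
  by_cases h : Surjective r
  · obtain ⟨φ, hφ⟩ := IsCycle.exists_equiv_zmod (F := Equiv.ofBijective r ⟨hr, h⟩) hrc rfl
    obtain ⟨ψ, hψ⟩ :=
      IsCycle.exists_equiv_zmod (F := Equiv.ofBijective s ⟨hs, hsurj.1 h⟩) hsc hcard.symm
    exact glue φ ψ hφ hψ
  · obtain ⟨φ, hφ⟩ := hrc.exists_equiv_nat hr h
    obtain ⟨ψ, hψ⟩ := hsc.exists_equiv_nat hs (mt hsurj.2 h)
    exact glue φ ψ hφ hψ

end SingleCycle

section CyclesOfAMap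

variable {Ω Ω' : Type u} {f : Ω → Ω} {g : Ω' → Ω'} {S : Set Ω} {T : Set Ω'}

theorem IsCycle.mapsTo (hS : IsCycle f S) : MapsTo f S S := fun x hx => (hS.2.1 x).2 hx

theorem IsCycle.restrict (hS : IsCycle f S) : IsCycle (hS.mapsTo.restrict f S S) univ := by
  refine ⟨@univ_nonempty _ hS.1.to_subtype, fun _ => by simp, fun A _ hA hinv => ?_⟩
  apply Subtype.val_injective.image_injective
  rw [Subtype.coe_image_univ]
  refine hS.2.2 _ (Subtype.coe_image_subset S A) (hA.image _) fun γ => ?_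
  by_cases hγ : γ ∈ S
  · simp only [mem_image, Subtype.exists, exists_and_right, exists_eq_right, hS.mapsTo hγ,
      exists_true_left, hγ]
    exact hinv ⟨γ, hγ⟩
  · have hfγ : f γ ∉ S := fun h => hγ ((hS.2.1 γ).1 h)
    simp [hγ, hfγ]

theorem IsCycle.surjective_restrict_iff (hS : IsCycle f S) :
    Surjective (hS.mapsTo.restrict f S S) ↔ S ⊆ range f := by
  rw [MapsTo.restrict_surjective_iff]
  refine ⟨fun h y hy => image_subset_range f S (h hy), fun h y hy => ?_⟩
  obtain ⟨x, rfl⟩ := h hy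
  exact ⟨x, (hS.2.1 x).1 hy, rfl⟩

theorem IsForwardCycle.not_surjective_restrict (hS : IsForwardCycle f S) :
    ¬ Surjective (hS.1.mapsTo.restrict f S S) := by
  obtain ⟨hc, -, α, hα, hαf⟩ := hS
  rw [hc.surjective_restrict_iff]
  exact fun h => hαf (h hα)

theorem IsCycle.isForwardCycle_of_not_surjective (hf : Injective f) (hS : IsCycle f S)
    (h : ¬ Surjective (hS.mapsTo.restrict f S S)) :
    IsForwardCycle f S ∧ Cardinal.mk S = Cardinal.aleph0 := by
  obtain ⟨φ, -⟩ := hS.restrict.exists_equiv_nat (hS.mapsTo.restrict_inj.2 hf.injOn) h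
  have hinf : Infinite S := Infinite.of_injective φ φ.injective
  have : Countable S := Countable.of_equiv ℕ φ
  obtain ⟨α, hα, hαf⟩ := not_subset.1 (mt hS.surjective_restrict_iff.2 h)
  exact ⟨⟨hS, infinite_coe_iff.1 hinf, α, hα, hαf⟩, Cardinal.mk_eq_aleph0 S⟩

theorem IsCycle.exists_equiv_semiconj_restrict (hf : Injective f) (hg : Injective g)
    (hS : IsCycle f S) (hT : IsCycle g T) (hcard : Cardinal.mk S = Cardinal.mk T)
    (hfwd : Cardinal.mk S = Cardinal.aleph0 → (IsForwardCycle f S ↔ IsForwardCycle g T)) :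
    ∃ φ : S ≃ T, Semiconj φ (hS.mapsTo.restrict f S S) (hT.mapsTo.restrict g T T) := by
  refine hS.restrict.exists_equiv_semiconj hT.restrict (hS.mapsTo.restrict_inj.2 hf.injOn)
    (hT.mapsTo.restrict_inj.2 hg.injOn) (congrArg Cardinal.toNat hcard) ?_
  rw [← not_iff_not]
  constructor
  · intro h
    obtain ⟨hfw, hℵ⟩ := hS.isForwardCycle_of_not_surjective hf h
    exact ((hfwd hℵ).1 hfw).not_surjective_restrict
  · intro h
    obtain ⟨hfw, hℵ⟩ := hT.isForwardCycle_of_not_surjective hg h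
    exact ((hfwd (hcard ▸ hℵ)).2 hfw).not_surjective_restrict

end CyclesOfAMap

theorem exists_equiv_semiconj_of_partition {ι α β : Type*} {fa : α → α} {fb : β → β}
    {S : ι → Set α} {T : ι → Set β} (hS : ∀ a, ∃! i, a ∈ S i) (hT : ∀ b, ∃! i, b ∈ T i)
    (hSf : ∀ i, MapsTo fa (S i) (S i)) (hTf : ∀ i, MapsTo fb (T i) (T i)) (φ : ∀ i, S i ≃ T i)
    (hφ : ∀ i, Semiconj (φ i) ((hSf i).restrict fa _ _) ((hTf i).restrict fb _ _)) :
    ∃ a : α ≃ β, Semiconj a fa fb := by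
  have hsymm : ∀ {i} {x : α} (hx : x ∈ S i), (sigmaEquiv S hS).symm x = ⟨i, x, hx⟩ :=
    fun _ => (Equiv.symm_apply_eq _).2 rfl
  refine ⟨(sigmaEquiv S hS).symm.trans ((Equiv.sigmaCongrRight φ).trans (sigmaEquiv T hT)),
    fun x => ?_⟩
  obtain ⟨i, hx, -⟩ := hS x
  simp only [Equiv.trans_apply, hsymm hx, hsymm (hSf i hx)]
  exact congrArg Subtype.val (hφ i ⟨x, hx⟩)

theorem stmt_8 {Ω : Type u} (f g : Ω → Ω) (hf : Function.Injective f)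
    (hg : Function.Injective g) (h : EquivCycleDecomp f g) :
    ∃ a : Equiv.Perm Ω, g = ⇑a ∘ f ∘ ⇑a.symm := by
  obtain ⟨I, S, T, hScyc, hTcyc, hSpart, hTpart, hcard, hfwd⟩ := h
  choose φ hφ using fun i =>
    (hScyc i).exists_equiv_semiconj_restrict hf hg (hTcyc i) (hcard i) (hfwd i)
  obtain ⟨a, ha⟩ := exists_equiv_semiconj_of_partition hSpart hTpart
    (fun i => (hScyc i).mapsTo) (fun i => (hTcyc i).mapsTo) φ hφ
  refine ⟨a, funext fun y => ?_⟩
  simpa using (ha (a.symm y)).symm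
end

section
/- Let Ω be a countably infinite set, f, h : Ω → Ω injective maps with |Ω \ f(Ω)| = |Ω \ h(Ω)|, such that f fixes infinitely many elements of Ω but h fixes only finitely many. Let g be any permutation of Ω with finite support. Then |Ω \ f(Ω)| + |Ω \ g(Ω)| = |Ω \ h(Ω)|, yet there are no permutations a, b of Ω with h = (a∘f∘a⁻¹)∘(b∘g∘b⁻¹). -/
theorem stmt_15 {Ω : Type*} [Countable Ω] [Infinite Ω] (f h : Ω → Ω)
    (hf : Function.Injective f) (hh : Function.Injective h)
    (hcard : Cardinal.mk ↥((Set.range f)ᶜ) = Cardinal.mk ↥((Set.range h)ᶜ))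
    (hffix : {x | f x = x}.Infinite) (hhfix : {x | h x = x}.Finite)
    (g : Equiv.Perm Ω) (hgsupp : {x | g x ≠ x}.Finite) :
    Cardinal.mk ↥((Set.range f)ᶜ) + Cardinal.mk ↥((Set.range (⇑g))ᶜ)
        = Cardinal.mk ↥((Set.range h)ᶜ) ∧
      ¬ ∃ a b : Equiv.Perm Ω, h = (⇑a ∘ f ∘ ⇑a.symm) ∘ (⇑b ∘ ⇑g ∘ ⇑b.symm) := by
  constructor
  · have : (Set.range (⇑g))ᶜ = ∅ := by
      simp [Set.range_eq_univ.mpr g.surjective]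
    rw [this]
    simp [hcard]
  · rintro ⟨a, b, hab⟩
    -- fixed points of h include (a '' fix f) \ (b '' supp g)
    have hsub : ((⇑a '' {x | f x = x}) \ (⇑b '' {x | g x ≠ x})) ⊆ {x | h x = x} := by
      rintro x ⟨⟨y, hy, rfl⟩, hx2⟩
      have hbg : b (g (b.symm (a y))) = a y := by
        by_contra hne
        exact hx2 ⟨b.symm (a y), by
          simpa using fun hgg => hne (by rw [hgg]; simp), by simp⟩
      simp only [Set.mem_setOf_eq, hab, Function.comp_apply, hbg]
      simp [Set.mem_setOf_eq.mp hy]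
    have hinf : ((⇑a '' {x | f x = x}) \ (⇑b '' {x | g x ≠ x})).Infinite := by
      apply Set.Infinite.diff
      · exact (hffix.image (a.injective.injOn))
      · exact hgsupp.image _
    exact hinf (hhfix.subset hsub)
end

section
/- There exist injective maps f, g : ℤ → ℤ such that f has exactly one cycle, which is a forward cycle; g is a bijection with exactly one cycle, which is an open cycle; and h = g∘f (f applied first) has exactly one forward cycle and no other cycles. Concretely, with f(i) = -i for i > 0 and f(i) = -i+1 for i ≤ 0, and g(i) = i+1, the composite h satisfies h(i) = -i+1 for i > 0 and h(i) = -i+2 for i ≤ 0, and both f and h have a single forward cycle equal to all of ℤ, while g's single cycle ℤ is open. -/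
/-!
Every nonempty set `T` with `f ⁻¹' T = T` contains, together with any point, its whole forward
orbit and every point whose forward orbit meets it. So when any two forward orbits meet, `Set.univ`
is the only cycle. For the two maps `f` and `g ∘ f` this holds because a single forward orbit
zigzags through all of `ℤ` (`0, 1, -1, 2, -2, …` and `1, 0, 2, -1, 3, …`), and a point outside
the range makes that cycle forward; for `g = (· + 1)` any two orbits meet and `g` is onto, so its
cycle is open.
-/

universe u

section Cycles

variable {Ω : Type u} {f : Ω → Ω}

theorem iterate_mem_iff {T : Set Ω} (hT : ∀ γ, f γ ∈ T ↔ γ ∈ T) (n : ℕ) (x : Ω) :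
    f^[n] x ∈ T ↔ x ∈ T := by
  induction n with
  | zero => rfl
  | succ n ih => rw [Function.iterate_succ_apply', hT, ih]

theorem eq_univ_of_invariant_of_orbits_meet (hmeet : ∀ x y, ∃ m n : ℕ, f^[m] x = f^[n] y)
    {T : Set Ω} (hne : T.Nonempty) (hT : ∀ γ, f γ ∈ T ↔ γ ∈ T) : T = Set.univ := by
  obtain ⟨x, hx⟩ := hne
  refine Set.eq_univ_of_forall fun y => ?_
  obtain ⟨m, n, hmn⟩ := hmeet y x
  rw [← iterate_mem_iff hT m, hmn, iterate_mem_iff hT]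
  exact hx

theorem isCycle_iff_eq_univ_of_orbits_meet [Nonempty Ω]
    (hmeet : ∀ x y, ∃ m n : ℕ, f^[m] x = f^[n] y) {S : Set Ω} :
    IsCycle f S ↔ S = Set.univ := by
  refine ⟨fun hS => eq_univ_of_invariant_of_orbits_meet hmeet hS.1 hS.2.1, ?_⟩
  rintro rfl
  exact ⟨Set.univ_nonempty, fun _ => Iff.rfl, fun T _ hne hT =>
    eq_univ_of_invariant_of_orbits_meet hmeet hne hT⟩

theorem orbits_meet_of_forall_iterate_eq {a : Ω} (horbit : ∀ z, ∃ n : ℕ, f^[n] a = z) :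
    ∀ x y, ∃ m n : ℕ, f^[m] x = f^[n] y := by
  intro x y
  obtain ⟨k, rfl⟩ := horbit x
  obtain ⟨l, rfl⟩ := horbit y
  exact ⟨l, k, by rw [← Function.iterate_add_apply, ← Function.iterate_add_apply, add_comm]⟩

theorem isForwardCycle_univ_of_forall_iterate_eq [Infinite Ω] {a b : Ω}
    (horbit : ∀ z, ∃ n : ℕ, f^[n] a = z) (hb : b ∉ Set.range f) :
    IsForwardCycle f Set.univ ∧ ∀ S, IsCycle f S → S = Set.univ := by
  have hcycle (S : Set Ω) : IsCycle f S ↔ S = Set.univ :=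
    isCycle_iff_eq_univ_of_orbits_meet (orbits_meet_of_forall_iterate_eq horbit)
  exact ⟨⟨(hcycle _).2 rfl, Set.infinite_univ, b, trivial, hb⟩, fun S => (hcycle S).1⟩

theorem isOpenCycle_univ_of_surjective [Infinite Ω] (hsurj : Function.Surjective f)
    (hmeet : ∀ x y, ∃ m n : ℕ, f^[m] x = f^[n] y) :
    IsOpenCycle f Set.univ ∧ ∀ S, IsCycle f S → S = Set.univ := by
  have hcycle (S : Set Ω) : IsCycle f S ↔ S = Set.univ :=
    isCycle_iff_eq_univ_of_orbits_meet hmeet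
  refine ⟨⟨(hcycle _).2 rfl, Set.infinite_univ, ?_⟩, fun S => (hcycle S).1⟩
  rintro ⟨-, -, b, -, hb⟩
  exact hb (hsurj b)

theorem iterate_two_mul_apply_of_zigzag (p q : ℕ → Ω) (hp : ∀ k, f (p k) = q k)
    (hq : ∀ k, f (q k) = p (k + 1)) (k : ℕ) : f^[2 * k] (p 0) = p k := by
  induction k with
  | zero => rfl
  | succ k ih =>
    rw [show 2 * (k + 1) = 2 + 2 * k by ring, Function.iterate_add_apply, ih,
      Function.iterate_succ_apply', Function.iterate_one, hp, hq]

theorem forall_exists_iterate_eq_of_zigzag (p q : ℕ → Ω) (hp : ∀ k, f (p k) = q k)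
    (hq : ∀ k, f (q k) = p (k + 1)) (hcover : ∀ z, ∃ k, z = p k ∨ z = q k) :
    ∀ z, ∃ n : ℕ, f^[n] (p 0) = z := by
  intro z
  obtain ⟨k, rfl | rfl⟩ := hcover z
  · exact ⟨2 * k, iterate_two_mul_apply_of_zigzag p q hp hq k⟩
  · refine ⟨2 * k + 1, ?_⟩
    rw [Function.iterate_succ_apply', iterate_two_mul_apply_of_zigzag p q hp hq, hp]

end Cycles

theorem Int.exists_nat_eq_neg_or_eq_add_one (z : ℤ) : ∃ k : ℕ, z = -k ∨ z = k + 1 := by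
  rcases le_or_gt z 0 with hz | hz
  · exact ⟨(-z).toNat, Or.inl (by omega)⟩
  · exact ⟨(z - 1).toNat, Or.inr (by omega)⟩

theorem Int.orbits_meet_add_one (x y : ℤ) : ∃ m n : ℕ, (· + 1)^[m] x = (· + 1)^[n] y := by
  refine ⟨(y - x).toNat, (x - y).toNat, ?_⟩
  simp only [add_right_iterate_apply, nsmul_eq_mul, mul_one]
  omega

def zigzag (i : ℤ) : ℤ := if 0 < i then -i else -i + 1

theorem zigzag_injective : Function.Injective zigzag := by
  intro a b hab
  unfold zigzag at hab
  split_ifs at hab <;> omega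

theorem zigzag_neg_natCast (k : ℕ) : zigzag (-k) = k + 1 := by
  unfold zigzag
  split_ifs <;> omega

theorem zigzag_natCast_add_one (k : ℕ) : zigzag (k + 1) = -(k + 1 : ℕ) := by
  unfold zigzag
  split_ifs <;> omega

theorem zero_notMem_range_zigzag : (0 : ℤ) ∉ Set.range zigzag := by
  rintro ⟨i, hi⟩
  unfold zigzag at hi
  split_ifs at hi <;> omega

theorem zigzag_orbit : ∀ z, ∃ n : ℕ, zigzag^[n] 0 = z :=
  forall_exists_iterate_eq_of_zigzag (fun k : ℕ => -(k : ℤ)) (fun k : ℕ => (k : ℤ) + 1)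
    zigzag_neg_natCast zigzag_natCast_add_one Int.exists_nat_eq_neg_or_eq_add_one

theorem add_one_comp_zigzag_orbit : ∀ z, ∃ n : ℕ, ((· + 1) ∘ zigzag)^[n] 1 = z := by
  refine forall_exists_iterate_eq_of_zigzag
    (fun k : ℕ => (k : ℤ) + 1) (fun k : ℕ => -(k : ℤ))
    (fun k => ?_) (fun k => ?_)
    fun z => (Int.exists_nat_eq_neg_or_eq_add_one z).imp fun _ => Or.symm
  · simp only [Function.comp_apply, zigzag_natCast_add_one]
    omega
  · simp only [Function.comp_apply, zigzag_neg_natCast]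
    omega

theorem one_notMem_range_add_one_comp_zigzag : (1 : ℤ) ∉ Set.range ((· + 1) ∘ zigzag) := by
  rintro ⟨i, hi⟩
  exact zero_notMem_range_zigzag ⟨i, by simpa using hi⟩

theorem stmt_17 :
    ∃ f g : ℤ → ℤ, Function.Injective f ∧ Function.Bijective g ∧
      (∀ i : ℤ, f i = if 0 < i then -i else -i + 1) ∧
      (∀ i : ℤ, g i = i + 1) ∧
      (∀ i : ℤ, (g ∘ f) i = if 0 < i then -i + 1 else -i + 2) ∧
      (IsForwardCycle f Set.univ ∧ ∀ S, IsCycle f S → S = Set.univ) ∧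
      (IsOpenCycle g Set.univ ∧ ∀ S, IsCycle g S → S = Set.univ) ∧
      (IsForwardCycle (g ∘ f) Set.univ ∧ ∀ S, IsCycle (g ∘ f) S → S = Set.univ) := by
  refine ⟨zigzag, (· + 1), zigzag_injective, (Equiv.addRight 1).bijective, fun _ => rfl,
    fun _ => rfl, fun i => ?_,
    isForwardCycle_univ_of_forall_iterate_eq zigzag_orbit zero_notMem_range_zigzag,
    isOpenCycle_univ_of_surjective (Equiv.addRight 1).surjective Int.orbits_meet_add_one,
    isForwardCycle_univ_of_forall_iterate_eq add_one_comp_zigzag_orbit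
      one_notMem_range_add_one_comp_zigzag⟩
  simp only [Function.comp_apply, zigzag]
  split_ifs <;> ring
end
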